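/- arXiv:1911.03609 — 2 statements merged into one kernel-verified Lean document; each statement's English description precedes it below -/
import Mathlib

section
/- If the local rule R of a d-state 3-neighborhood cellular automaton is unbalanced (i.e., the fiber sizes |R⁻¹(s)| are not all equal to d²), then for every n ≥ 3 the global map G_n on length-n periodic configurations is not surjective, hence not bijective. -/
/-- The periodic-boundary global map of a 3-neighborhood `d`-state CA with local rule `R`. -/
def glob {d : ℕ} (R : Fin d → Fin d → Fin d → Fin d) (n : ℕ)
    (c : ZMod n → Fin d) : ZMod n → Fin d :=
  fun i => R (c (i - 1)) (c i) (c (i + 1))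

/-!
Reading off the neighborhood `(c (-1), c 0, c 1)` of cell `0` is, for `n ≥ 3`, a surjective
additive homomorphism once `Fin d` is given its cyclic group structure, so all its fibers have
the same positive size `K`. Hence the number of configurations `c` with `glob R n c 0 = s` is
`|R⁻¹(s)| · K`. If `glob R n` is a bijection, this number equals the number of configurations
with `c 0 = s`, which does not depend on `s`; so all fibers of `R` have the same size, namely
`d³ / d = d²`.
-/

open Finset Function

section Fibers

variable {X Y Z : Type*} [Fintype X] [DecidableEq Z]

theorem card_filter_comp_eq_mul [Fintype Y] [DecidableEq Y] {φ : X → Y} {K : ℕ}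
    (hφ : ∀ y, #{x | φ x = y} = K) (g : Y → Z) (z : Z) :
    #{x | g (φ x) = z} = #{y | g y = z} * K := by
  rw [card_eq_sum_card_fiberwise (f := φ) (t := {y | g y = z}) fun x hx => by simpa using hx,
    sum_congr rfl fun y hy => ?_, sum_const, smul_eq_mul]
  rw [filter_filter, ← hφ y]
  congr 1 with x
  simp only [mem_filter, mem_univ, true_and, and_iff_right_iff_imp]
  rintro rfl
  simpa using hy

theorem card_filter_eq_of_comp [Fintype Y] [DecidableEq Y] {φ : X → Y} {K : ℕ}
    (hφ : ∀ y, #{x | φ x = y} = K) (hK : 0 < K) {g : Y → Z}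
    (hgφ : ∀ z z', #{x | g (φ x) = z} = #{x | g (φ x) = z'}) (z z' : Z) :
    #{y | g y = z} = #{y | g y = z'} :=
  Nat.eq_of_mul_eq_mul_right hK <| by
    rw [← card_filter_comp_eq_mul hφ, ← card_filter_comp_eq_mul hφ, hgφ]

theorem card_filter_comp_eq_of_bijective {G : X → X} (hG : Bijective G) (f : X → Z) (z : Z) :
    #{x | f (G x) = z} = #{x | f x = z} := by
  rw [← Fintype.card_subtype, ← Fintype.card_subtype]
  exact Fintype.card_congr ((Equiv.ofBijective G hG).subtypeEquiv fun _ => Iff.rfl)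

theorem card_filter_mul_card_eq [Fintype Y] [Fintype Z] {g : Y → Z}
    (hg : ∀ z z', #{y | g y = z} = #{y | g y = z'}) (z : Z) :
    #{y | g y = z} * Fintype.card Z = Fintype.card Y := by
  rw [← card_univ (α := Y),
    card_eq_sum_card_fiberwise (f := g) (s := univ) (t := univ) fun y _ => mem_univ _,
    sum_congr rfl fun z' _ => hg z' z, sum_const, smul_eq_mul, card_univ, mul_comm]

end Fibers

section Neighborhood

variable (α : Type*) [AddCommGroup α] (n : ℕ)

def neighborhoodHom : (ZMod n → α) →+ α × α × α :=
  (Pi.evalAddMonoidHom _ (-1)).prod ((Pi.evalAddMonoidHom _ 0).prod (Pi.evalAddMonoidHom _ 1))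

theorem neighborhoodHom_surjective (hn : 3 ≤ n) : Surjective (neighborhoodHom α n) := by
  have : Fact (2 < n) := ⟨hn⟩
  have : Fact (1 < n) := ⟨by omega⟩
  intro t
  refine ⟨Pi.single (-1) t.1 + Pi.single 0 t.2.1 + Pi.single 1 t.2.2, ?_⟩
  simp [neighborhoodHom, ZMod.neg_one_ne_one, ZMod.neg_one_ne_one.symm]

end Neighborhood

theorem glob_apply_zero {d : ℕ} (R : Fin d → Fin d → Fin d → Fin d) (n : ℕ)
    (c : ZMod n → Fin d) :
    glob R n c 0 = R (c (-1)) (c 0) (c 1) := by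
  simp [glob]

theorem card_filter_eq_sq_of_surjective_glob {d n : ℕ} (hn : 3 ≤ n)
    (R : Fin d → Fin d → Fin d → Fin d) (hR : Surjective (glob R n)) (s : Fin d) :
    #{t : Fin d × Fin d × Fin d | R t.1 t.2.1 t.2.2 = s} = d ^ 2 := by
  obtain _ | d := d
  · exact s.elim0
  have : NeZero n := ⟨by omega⟩
  set ev := neighborhoodHom (Fin (d + 1)) n
  have hev_surj := neighborhoodHom_surjective (Fin (d + 1)) n hn
  have hev (t) : #{x | ev x = t} = #{x | ev x = 0} :=
    AddMonoidHom.card_fiber_eq_of_mem_range ev (hev_surj t) (hev_surj 0)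
  have hev_pos : 0 < #{x | ev x = 0} := card_pos.2 ⟨0, by simp⟩
  have hlocal (s s' : Fin (d + 1)) :
      #{x | R (ev x).1 (ev x).2.1 (ev x).2.2 = s} =
        #{x | R (ev x).1 (ev x).2.1 (ev x).2.2 = s'} := by
    have h0 := card_filter_comp_eq_of_bijective hR.bijective_of_finite (fun c => c 0)
    have hc := AddMonoidHom.card_fiber_eq_of_mem_range
      (Pi.evalAddMonoidHom (fun _ => Fin (d + 1)) (0 : ZMod n))
      ⟨fun _ => s, rfl⟩ ⟨fun _ => s', rfl⟩
    simp only [glob_apply_zero, Pi.evalAddMonoidHom_apply] at h0 hc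
    simpa [ev, neighborhoodHom, h0] using hc
  have hcard := card_filter_mul_card_eq
    (card_filter_eq_of_comp (g := fun t => R t.1 t.2.1 t.2.2) hev hev_pos hlocal) s
  simp only [Fintype.card_fin, Fintype.card_prod] at hcard
  exact Nat.eq_of_mul_eq_mul_right (Nat.add_one_pos d) (by rw [hcard]; ring)

/-- If a rule is unbalanced (some fiber does not have size d²), then for every n ≥ 3
the global map Gₙ is not surjective, hence not bijective. -/
theorem unbalanced_not_surjective {d : ℕ} (R : Fin d → Fin d → Fin d → Fin d)
    (h : ¬ ∀ s : Fin d,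
      (Finset.univ.filter fun t : Fin d × Fin d × Fin d => R t.1 t.2.1 t.2.2 = s).card = d ^ 2) :
    ∀ n : ℕ, 3 ≤ n →
      ¬ Function.Surjective (glob R n) ∧ ¬ Function.Bijective (glob R n) := by
  intro n hn
  have hns : ¬ Surjective (glob R n) := fun hR =>
    h (card_filter_eq_sq_of_surjective_glob hn R hR)
  exact ⟨hns, fun hb => hns hb.2⟩
end

section
/- Elementary CA rule 105, given by R(x,y,z) = 1 + x + y + z (mod 2), has injective global map G_n on length-n periodic configurations if and only if 3 does not divide n. -/
/-- Elementary CA rule 105: complemented sum of the three neighbors mod 2. -/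
def rule105 : Fin 2 → Fin 2 → Fin 2 → Fin 2 :=
  fun x y z => 1 + x + y + z

/-! Rule 105 is rule 150 (`x + y + z`) followed by adding the constant `1`, so `G_n` is injective
iff the additive map `globRule150 n` has trivial kernel. A kernel element `d` satisfies
`d (i - 1) + d i + d (i + 1) = 0`, hence is `3`-periodic. If `3 ∤ n`, then `3` is a unit of
`ZMod n`, so `d` is constant, and `3 • d 0 = 0` forces `d = 0` over `𝔽₂`. If `3 ∣ n`, the pattern
`0, 1, 1` pulled back along `ZMod n → ZMod 3` is a nonzero kernel element. -/

open Function

def rule150 : Fin 2 → Fin 2 → Fin 2 → Fin 2 :=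
  fun x y z => x + y + z

def globRule150 (n : ℕ) : (ZMod n → Fin 2) →+ (ZMod n → Fin 2) where
  toFun := glob rule150 n
  map_zero' := by
    funext i
    rfl
  map_add' c c' := by
    funext i
    simp only [glob, rule150, Pi.add_apply]
    abel

theorem glob_rule105_eq (n : ℕ) (c : ZMod n → Fin 2) :
    glob rule105 n c = 1 + globRule150 n c := by
  funext i
  simp only [glob, rule105, globRule150, rule150, AddMonoidHom.coe_mk, ZeroHom.coe_mk,
    Pi.add_apply, Pi.one_apply, add_assoc]

theorem injective_glob_rule105_iff (n : ℕ) :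
    Injective (glob rule105 n) ↔ Injective (globRule150 n) := by
  have h : glob rule105 n = (1 + ·) ∘ globRule150 n := funext (glob_rule105_eq n)
  rw [h]
  exact (add_right_injective 1).of_comp_iff _

theorem glob_comp_ringHom {d m n : ℕ} (R : Fin d → Fin d → Fin d → Fin d)
    (φ : ZMod n →+* ZMod m) (c : ZMod m → Fin d) :
    glob R n (c ∘ φ) = glob R m c ∘ φ := by
  funext i
  simp [glob, map_sub, map_add, map_one]

theorem periodic_three_of_forall_add_add_eq_zero {A : Type*} [AddCommGroup A] {n : ℕ}
    {d : ZMod n → A} (h : ∀ i, d (i - 1) + d i + d (i + 1) = 0) : Periodic d 3 := by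
  intro i
  have h₁ := h (i + 1)
  have h₂ := h (i + 2)
  rw [show i + 1 - 1 = i by ring, show i + 1 + 1 = i + 2 by ring] at h₁
  rw [show i + 2 - 1 = i + 1 by ring, show i + 2 + 1 = i + 3 by ring] at h₂
  calc d (i + 3)
      = d (i + 1) + d (i + 2) + d (i + 3) - (d i + d (i + 1) + d (i + 2)) + d i := by abel
    _ = d i := by rw [h₁, h₂, sub_zero, zero_add]

theorem ZMod.apply_eq_apply_zero_of_periodic {α : Type*} {n : ℕ} {f : ZMod n → α} {c : ZMod n}
    (hf : Periodic f c) (hc : IsUnit c) (x : ZMod n) : f x = f 0 := by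
  obtain ⟨b, hb⟩ := hc.exists_left_inv
  obtain ⟨k, hk⟩ := ZMod.intCast_surjective (x * b)
  rw [← hf.int_mul_eq k, hk, mul_assoc, hb, mul_one]

theorem isUnit_three_of_not_dvd {n : ℕ} (h3 : ¬ 3 ∣ n) : IsUnit (3 : ZMod n) := by
  exact_mod_cast (ZMod.isUnit_iff_coprime 3 n).mpr (Nat.prime_three.coprime_iff_not_dvd.mpr h3)

theorem injective_globRule150_of_not_dvd {n : ℕ} (h3 : ¬ 3 ∣ n) : Injective (globRule150 n) := by
  refine (injective_iff_map_eq_zero _).mpr fun d hd => ?_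
  have hsum : ∀ i, d (i - 1) + d i + d (i + 1) = 0 := fun i => congrFun hd i
  have hconst := ZMod.apply_eq_apply_zero_of_periodic
    (periodic_three_of_forall_add_add_eq_zero hsum) (isUnit_three_of_not_dvd h3)
  have hd0 : d 0 = 0 := by
    have h0 := hsum 0
    rw [hconst (0 - 1), hconst (0 + 1)] at h0
    have add_add_self : ∀ a : Fin 2, a + a + a = a := by decide
    rwa [add_add_self] at h0
  funext i
  rw [hconst i, hd0, Pi.zero_apply]

def pattern011 : ZMod 3 → Fin 2 := ![0, 1, 1]

theorem not_injective_globRule150_of_dvd {n : ℕ} (h3 : 3 ∣ n) : ¬ Injective (globRule150 n) := by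
  let φ := ZMod.castHom h3 (ZMod 3)
  have hker : globRule150 n (pattern011 ∘ φ) = 0 := by
    change glob rule150 n (pattern011 ∘ φ) = 0
    rw [glob_comp_ringHom, show glob rule150 3 pattern011 = 0 by decide]
    rfl
  have hne : pattern011 ∘ φ ≠ 0 := fun h => by
    have h1 : pattern011 (φ 1) = 0 := congrFun h 1
    rw [map_one] at h1
    exact absurd h1 (by decide)
  exact fun hinj => hne ((injective_iff_map_eq_zero _).mp hinj _ hker)

/-- ECA rule 105 has injective global map on length-n periodic configurations iff
3 does not divide n. -/
theorem rule105_injective_iff :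
    ∀ n : ℕ, Function.Injective (glob rule105 n) ↔ ¬ (3 ∣ n) := by
  intro n
  rw [injective_glob_rule105_iff]
  exact ⟨fun hinj h3 => not_injective_globRule150_of_dvd h3 hinj, injective_globRule150_of_not_dvd⟩
end
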